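/- Let a < 0 and φ : [a, 0] → ℝ be C¹ with all zeros of φ in [a, 0] simple and φ not identically zero. Suppose (φ_n) is a sequence of C¹ functions on [a, 0], none identically zero, with φ_n → φ and φ_n' → φ' uniformly on [a, 0]. If moreover φ(a) ≠ 0 and φ(0) ≠ 0, then for all sufficiently large n, the number of sign changes of φ_n on [a, 0] equals the number of sign changes of φ on [a, 0]. -/

import Mathlib

open Set Filter

/-- The number of sign changes of `φ` on the set `A`, valued in `ℕ∞`. -/
noncomputable def signChanges (φ : ℝ → ℝ) (A : Set ℝ) : ℕ∞ :=
  sSup {m : ℕ∞ | ∃ k : ℕ, m = (k : ℕ∞) ∧ ∃ θ : Fin (k + 1) → ℝ,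
    (∀ i, θ i ∈ A) ∧ (∀ i j : Fin (k + 1), i < j → θ j < θ i) ∧
    ∀ i : Fin k, φ (θ i.succ) * φ (θ i.castSucc) < 0}

open Topology

/-! By the intermediate value theorem a continuous `ψ` has at most as many sign changes as zeros.
Each zero of `φ` is simple and interior, so `φ` is strictly monotone on a small interval around
it: the zeros are isolated, hence finitely many, and each is a sign crossing, so extending a chain
of sample points past one zero at a time gives `sc(φ) = #zeros(φ)`. For large `n`, `φₙ'` stays
close to `φ'(z) ≠ 0` on the interval around each zero `z`, so `φₙ` has at most one zero there,
and none elsewhere because `|φ|` is bounded below off these intervals; thus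
`sc(φₙ) ≤ #zeros(φₙ) ≤ #zeros(φ)`. Conversely a chain of sign changes of `φ` survives pointwise
perturbation, so `sc(φ) ≤ sc(φₙ)` eventually. -/

theorem exists_mem_Ioo_eq_zero_of_mul_neg {f : ℝ → ℝ} {x y : ℝ} (hxy : x ≤ y)
    (hf : ContinuousOn f (Icc x y)) (h : f x * f y < 0) : ∃ c ∈ Ioo x y, f c = 0 := by
  rcases mul_neg_iff.1 h with ⟨hx, hy⟩ | ⟨hx, hy⟩
  · exact intermediate_value_Ioo' hxy hf ⟨hy, hx⟩
  · exact intermediate_value_Ioo hxy hf ⟨hx, hy⟩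

theorem mul_pos_of_forall_ne_zero {f : ℝ → ℝ} {x y : ℝ} (hxy : x ≤ y)
    (hf : ContinuousOn f (Icc x y)) (h : ∀ t ∈ Icc x y, f t ≠ 0) : 0 < f x * f y := by
  by_contra! hle
  rcases hle.lt_or_eq with hlt | heq
  · obtain ⟨c, hc, hc0⟩ := exists_mem_Ioo_eq_zero_of_mul_neg hxy hf hlt
    exact h c (Ioo_subset_Icc_self hc) hc0
  · rcases mul_eq_zero.1 heq with h0 | h0
    exacts [h x (left_mem_Icc.2 hxy) h0, h y (right_mem_Icc.2 hxy) h0]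

theorem Set.encard_le_of_subset_biUnion {α β : Type*} {s : Set α} {S : Set β} {J : β → Set α}
    (hs : s ⊆ ⋃ i ∈ S, J i) (hJ : ∀ i ∈ S, (s ∩ J i).Subsingleton) : s.encard ≤ S.encard := by
  have hex : ∀ x ∈ s, ∃ i ∈ S, x ∈ J i := fun x hx => by simpa using hs hx
  rcases s.eq_empty_or_nonempty with rfl | ⟨x₀, hx₀⟩
  · simp
  have : Nonempty β := ⟨(hex x₀ hx₀).choose⟩
  choose! g hgS hgJ using hex
  refine encard_le_encard_of_injOn (fun x hx => hgS x hx) fun x hx y hy hxy => ?_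
  exact hJ _ (hgS x hx) ⟨hx, hgJ x hx⟩ ⟨hy, hxy ▸ hgJ y hy⟩

theorem TendstoUniformlyOn.eventually_forall_ne_zero {α ι E : Type*} [TopologicalSpace α]
    [NormedAddCommGroup E] {l : Filter ι} {F : ι → α → E} {f : α → E} {K : Set α}
    (hF : TendstoUniformlyOn F f l K) (hK : IsCompact K) (hf : ContinuousOn f K)
    (hf0 : ∀ x ∈ K, f x ≠ 0) : ∀ᶠ n in l, ∀ x ∈ K, F n x ≠ 0 := by
  rcases K.eq_empty_or_nonempty with rfl | hne
  · exact Eventually.of_forall fun _ x hx => hx.elim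
  obtain ⟨x₀, hx₀, hmin⟩ := hK.exists_isMinOn hne hf.norm
  filter_upwards [Metric.tendstoUniformlyOn_iff.1 hF _ (norm_pos_iff.2 (hf0 x₀ hx₀))]
    with n hn x hx h0
  have hlt := hn x hx
  rw [h0, dist_zero_right] at hlt
  exact (isMinOn_iff.1 hmin x hx).not_gt hlt

theorem strictMonoOn_or_strictAntiOn_of_abs_deriv_sub_lt {g : ℝ → ℝ} {D : Set ℝ} {c : ℝ}
    (hD : Convex ℝ D) (hg : ContinuousOn g D) (h : ∀ x ∈ interior D, |deriv g x - c| < |c|) :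
    StrictMonoOn g D ∨ StrictAntiOn g D := by
  rcases le_or_gt c 0 with hc | hc
  · refine .inr (strictAntiOn_of_deriv_neg hD hg fun x hx => ?_)
    have hx := h x hx
    rw [abs_of_nonpos hc] at hx
    linarith [le_abs_self (deriv g x - c)]
  · refine .inl (strictMonoOn_of_deriv_pos hD hg fun x hx => ?_)
    have hx := h x hx
    rw [abs_of_pos hc] at hx
    linarith [neg_abs_le (deriv g x - c)]

theorem exists_Icc_strictMonoOn_or_strictAntiOn_of_deriv_near {f : ℝ → ℝ} {s : Set ℝ} {z : ℝ}
    (hf : ContinuousAt f z) (hfz : f z ≠ 0) (hs : s ∈ 𝓝 z) :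
    ∃ η > 0, Icc (z - η) (z + η) ⊆ interior s ∧ ∀ g : ℝ → ℝ,
      ContinuousOn g (Icc (z - η) (z + η)) →
      (∀ x ∈ Icc (z - η) (z + η), dist (f x) (derivWithin g s x) < |f z| / 2) →
      StrictMonoOn g (Icc (z - η) (z + η)) ∨ StrictAntiOn g (Icc (z - η) (z + η)) := by
  have hint : ∀ᶠ x in 𝓝 z, x ∈ interior s := interior_mem_nhds.2 hs
  have hev : ∀ᶠ x in 𝓝 z, x ∈ interior s ∧ dist (f x) (f z) < |f z| / 2 :=
    hint.and (hf.eventually (Metric.ball_mem_nhds _ (half_pos (abs_pos.2 hfz))))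
  obtain ⟨η, hη, hsub⟩ := Metric.nhds_basis_closedBall.mem_iff.1 hev
  rw [Real.closedBall_eq_Icc] at hsub
  refine ⟨η, hη, fun x hx => (hsub hx).1, fun g hg hgf =>
    strictMonoOn_or_strictAntiOn_of_abs_deriv_sub_lt (c := f z) (convex_Icc _ _) hg fun x hx => ?_⟩
  have hxJ := interior_subset hx
  rw [← derivWithin_of_mem_nhds (mem_interior_iff_mem_nhds.1 (hsub hxJ).1), ← Real.dist_eq]
  calc dist (derivWithin g s x) (f z) ≤ dist (f x) (derivWithin g s x) + dist (f x) (f z) :=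
        dist_triangle_left _ _ _
    _ < |f z| / 2 + |f z| / 2 := add_lt_add (hgf x hxJ) (hsub hxJ).2
    _ = |f z| := add_halves _

def IsSignChain (ψ : ℝ → ℝ) (A : Set ℝ) {k : ℕ} (θ : Fin (k + 1) → ℝ) : Prop :=
  (∀ i, θ i ∈ A) ∧ StrictAnti θ ∧ ∀ i : Fin k, ψ (θ i.succ) * ψ (θ i.castSucc) < 0

section SignChains

variable {ψ : ℝ → ℝ} {A : Set ℝ}

theorem IsSignChain.le_signChanges {k : ℕ} {θ : Fin (k + 1) → ℝ} (h : IsSignChain ψ A θ) :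
    (k : ℕ∞) ≤ signChanges ψ A :=
  le_sSup ⟨k, rfl, θ, h⟩

theorem IsSignChain.mono {B : Set ℝ} {k : ℕ} {θ : Fin (k + 1) → ℝ} (h : IsSignChain ψ A θ)
    (hAB : A ⊆ B) : IsSignChain ψ B θ :=
  ⟨fun i => hAB (h.1 i), h.2.1, h.2.2⟩

theorem IsSignChain.vecCons {k : ℕ} {θ : Fin (k + 1) → ℝ} (h : IsSignChain ψ A θ) {b : ℝ}
    (hb : b ∈ A) (hlt : θ 0 < b) (hsign : ψ (θ 0) * ψ b < 0) :
    IsSignChain ψ A (Matrix.vecCons b θ) := by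
  refine ⟨Fin.cases hb h.1, h.2.1.vecCons hlt, fun i => ?_⟩
  cases i using Fin.cases with
  | zero => exact hsign
  | succ i => exact h.2.2 i

theorem exists_isSignChain_eq_signChanges (h0 : signChanges ψ A ≠ 0)
    (htop : signChanges ψ A ≠ ⊤) :
    ∃ k : ℕ, signChanges ψ A = k ∧ ∃ θ : Fin (k + 1) → ℝ, IsSignChain ψ A θ := by
  unfold signChanges at h0 htop ⊢
  obtain ⟨m, hm, -⟩ := not_forall₂.1 fun h => h0 (sSup_eq_bot.2 h)
  have : Nonempty _ := ⟨(⟨m, hm⟩ : Subtype _)⟩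
  obtain ⟨k, hk, θ, hθ⟩ := ENat.sSup_mem_of_nonempty_of_lt_top (lt_top_iff_ne_top.2 htop)
  exact ⟨k, hk, θ, hθ⟩

theorem eventually_signChanges_le {ι : Type*} {l : Filter ι} {ψn : ι → ℝ → ℝ}
    (hψ : ∀ x ∈ A, Tendsto (fun n => ψn n x) l (𝓝 (ψ x))) (hfin : signChanges ψ A ≠ ⊤) :
    ∀ᶠ n in l, signChanges ψ A ≤ signChanges (ψn n) A := by
  rcases eq_or_ne (signChanges ψ A) 0 with h0 | h0
  · exact Eventually.of_forall fun n => h0 ▸ zero_le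
  obtain ⟨k, hk, θ, hθA, hθ, hsign⟩ := exists_isSignChain_eq_signChanges h0 hfin
  have hev : ∀ᶠ n in l, ∀ i : Fin k, ψn n (θ i.succ) * ψn n (θ i.castSucc) < 0 :=
    eventually_all.2 fun i => ((hψ _ (hθA _)).mul (hψ _ (hθA _))).eventually_lt_const (hsign i)
  filter_upwards [hev] with n hn
  exact hk ▸ IsSignChain.le_signChanges ⟨hθA, hθ, hn⟩

theorem signChanges_le_encard_zeros [A.OrdConnected]
    (hψ : ContinuousOn ψ A) : signChanges ψ A ≤ {x ∈ A | ψ x = 0}.encard := by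
  refine sSup_le ?_
  rintro _ ⟨k, rfl, θ, hθA, hθ, hsign⟩
  have hzero (i : Fin k) : ∃ ζ ∈ Ioo (θ i.succ) (θ i.castSucc), ψ ζ = 0 :=
    exists_mem_Ioo_eq_zero_of_mul_neg (hθ _ _ Fin.castSucc_lt_succ).le
      (hψ.mono (Set.OrdConnected.out ‹_› (hθA _) (hθA _))) (hsign i)
  choose ζ hζ hζ0 using hzero
  have hanti : StrictAnti ζ := fun i j hij => calc
    ζ j < θ j.castSucc := (hζ j).2
    _ ≤ θ i.succ := (StrictAnti.antitone hθ) (Fin.succ_le_castSucc_iff.2 hij)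
    _ < ζ i := (hζ i).1
  calc (k : ℕ∞) = ENat.card (Fin k) := by simp
    _ ≤ (range ζ).encard := hanti.injective.encard_range
    _ ≤ _ := by
        refine encard_le_encard ?_
        rintro _ ⟨i, rfl⟩
        exact ⟨Set.OrdConnected.out ‹_› (hθA _) (hθA _) (Ioo_subset_Icc_self (hζ i)), hζ0 i⟩

end SignChains

def SignCrossesAt (ψ : ℝ → ℝ) (z : ℝ) : Prop :=
  ∃ ε > 0, ∀ x ∈ Ioo (z - ε) z, ∀ y ∈ Ioo z (z + ε), ψ x * ψ y < 0

section SignCrossing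

variable {ψ : ℝ → ℝ}

theorem SignCrossesAt.eventually_ne_zero {z : ℝ} (h : SignCrossesAt ψ z) :
    ∀ᶠ x in 𝓝[≠] z, ψ x ≠ 0 := by
  obtain ⟨ε, hε, hsign⟩ := h
  have hl : z - ε / 2 ∈ Ioo (z - ε) z := ⟨by linarith, by linarith⟩
  have hr : z + ε / 2 ∈ Ioo z (z + ε) := ⟨by linarith, by linarith⟩
  rw [← nhdsLT_sup_nhdsGT, eventually_sup]
  constructor
  · filter_upwards [Ioo_mem_nhdsLT (by linarith : z - ε < z)] with x hx
    exact left_ne_zero_of_mul (hsign x hx _ hr).ne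
  · filter_upwards [Ioo_mem_nhdsGT (by linarith : z < z + ε)] with y hy
    exact right_ne_zero_of_mul (hsign _ hl y hy).ne

theorem signCrossesAt_of_strictMonoOn_or_strictAntiOn {z η : ℝ} (hη : 0 < η)
    (h : StrictMonoOn ψ (Icc (z - η) (z + η)) ∨ StrictAntiOn ψ (Icc (z - η) (z + η)))
    (hz : ψ z = 0) : SignCrossesAt ψ z := by
  refine ⟨η, hη, fun x hx y hy => ?_⟩
  have hxI : x ∈ Icc (z - η) (z + η) := ⟨hx.1.le, by linarith [hx.2]⟩
  have hzI : z ∈ Icc (z - η) (z + η) := ⟨by linarith, by linarith⟩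
  have hyI : y ∈ Icc (z - η) (z + η) := ⟨by linarith [hy.1], hy.2.le⟩
  rcases h with h | h
  · exact mul_neg_of_neg_of_pos (hz ▸ h hxI hzI hx.2) (hz ▸ h hzI hyI hy.1)
  · exact mul_neg_of_pos_of_neg (hz ▸ h hxI hzI hx.2) (hz ▸ h hzI hyI hy.1)

theorem signCrossesAt_of_derivWithin_ne_zero {s : Set ℝ} {z : ℝ} (hψ : ContinuousOn ψ s)
    (hψ' : ContinuousAt (derivWithin ψ s) z) (hs : s ∈ 𝓝 z) (hz : ψ z = 0)
    (hz' : derivWithin ψ s z ≠ 0) : SignCrossesAt ψ z := by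
  obtain ⟨η, hη, hsub, hmono⟩ := exists_Icc_strictMonoOn_or_strictAntiOn_of_deriv_near hψ' hz' hs
  exact signCrossesAt_of_strictMonoOn_or_strictAntiOn hη
    (hmono ψ (hψ.mono (hsub.trans interior_subset)) fun x _ => by simpa using hz') hz

theorem finite_zeros_of_signCrossesAt {K : Set ℝ} (hK : IsCompact K) (hψ : ContinuousOn ψ K)
    (hcross : ∀ z ∈ K, ψ z = 0 → SignCrossesAt ψ z) : {x ∈ K | ψ x = 0}.Finite := by
  refine IsCompact.finite ?_ (isDiscrete_iff_nhdsNE.2 fun z hz => ?_)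
  · exact hK.of_isClosed_subset (hψ.preimage_isClosed_of_isClosed hK.isClosed isClosed_singleton)
      inter_subset_left
  · refine inf_principal_eq_bot.2 ?_
    filter_upwards [(hcross z hz.1 hz.2).eventually_ne_zero] with x hx hx'
    exact hx hx'.2

theorem exists_isSignChain_of_encard_zeros {a : ℝ} (ha : ψ a ≠ 0) (n : ℕ) :
    ∀ b, a ≤ b → ContinuousOn ψ (Icc a b) → (∀ z ∈ Icc a b, ψ z = 0 → SignCrossesAt ψ z) →
      ψ b ≠ 0 → {x ∈ Icc a b | ψ x = 0}.encard = n →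
      ∃ θ : Fin (n + 1) → ℝ, IsSignChain ψ (Icc a b) θ ∧ θ 0 = b := by
  induction n with
  | zero =>
    intro b hab _ _ _ _
    exact ⟨fun _ => b,
      ⟨fun _ => right_mem_Icc.2 hab, Subsingleton.strictAnti (α := Fin 1) _, finZeroElim⟩, rfl⟩
  | succ n ih =>
    intro b hab hψ hcross hb hZ
    set Z := {x ∈ Icc a b | ψ x = 0}
    obtain ⟨z, hzZ, hzmax⟩ : ∃ z ∈ Z, ∀ x ∈ Z, x ≤ z :=
      Z.exists_max_image id (finite_of_encard_eq_coe hZ) (nonempty_of_encard_ne_zero (by simp [hZ]))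
    have haz : a < z := hzZ.1.1.lt_of_ne (by rintro rfl; exact ha hzZ.2)
    have hzb : z < b := hzZ.1.2.lt_of_ne (by rintro rfl; exact hb hzZ.2)
    obtain ⟨ε, hε, hsign⟩ := hcross z hzZ.1 hzZ.2
    set y := max ((a + z) / 2) (z - ε / 2)
    set y' := min ((z + b) / 2) (z + ε / 2)
    have hy : y ∈ Ioo (z - ε) z :=
      ⟨lt_max_of_lt_right (by linarith), max_lt (by linarith) (by linarith)⟩
    have hy' : y' ∈ Ioo z (z + ε) :=
      ⟨lt_min (by linarith) (by linarith), min_lt_of_right_lt (by linarith)⟩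
    have hay : a ≤ y := le_max_of_le_left (by linarith)
    have hy'b : y' ≤ b := min_le_of_left_le (by linarith)
    have hleft : ∀ x ∈ Ioo (z - ε) z, ψ x ≠ 0 :=
      fun x hx => left_ne_zero_of_mul (hsign x hx y' hy').ne
    -- `z` is the largest zero and `ψ` has no zeros on `(z - ε, z)`, so `[a, y]` loses exactly `z`.
    have hZy : {x ∈ Icc a y | ψ x = 0} = Z \ {z} := by
      ext x
      simp only [Z, Set.mem_sdiff, mem_singleton_iff, mem_Icc]
      constructor
      · rintro ⟨⟨hax, hxy⟩, hx0⟩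
        exact ⟨⟨⟨hax, by linarith [hy.2]⟩, hx0⟩, (hxy.trans_lt hy.2).ne⟩
      · rintro ⟨⟨⟨hax, hxb⟩, hx0⟩, hxz⟩
        refine ⟨⟨hax, not_lt.1 fun hyx => hleft x ⟨by linarith [hy.1], ?_⟩ hx0⟩, hx0⟩
        exact (hzmax x ⟨⟨hax, hxb⟩, hx0⟩).lt_of_ne hxz
    have hsub : Icc a y ⊆ Icc a b := Icc_subset_Icc_right (by linarith [hy.2])
    obtain ⟨θ, hθ, hθ0⟩ := ih y hay (hψ.mono hsub) (fun x hx => hcross x (hsub hx)) (hleft y hy)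
      (by rw [hZy, encard_sdiff_singleton_of_mem hzZ, hZ]; rfl)
    have hright : 0 < ψ y' * ψ b :=
      mul_pos_of_forall_ne_zero hy'b (hψ.mono (Icc_subset_Icc_left (by linarith [hy'.1])))
        fun t ht h0 => (hzmax t ⟨⟨by linarith [ht.1, hy'.1], ht.2⟩, h0⟩).not_gt
          (by linarith [ht.1, hy'.1])
    have hyb : ψ y * ψ b < 0 := by
      nlinarith [mul_neg_of_neg_of_pos (hsign y hy y' hy') hright, sq_nonneg (ψ y')]
    exact ⟨Matrix.vecCons b θ, (hθ.mono hsub).vecCons (right_mem_Icc.2 hab)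
      (hθ0 ▸ by linarith [hy.2]) (hθ0 ▸ hyb), rfl⟩

theorem signChanges_eq_encard_zeros {a b : ℝ} (hab : a ≤ b) (hψ : ContinuousOn ψ (Icc a b))
    (hcross : ∀ z ∈ Icc a b, ψ z = 0 → SignCrossesAt ψ z) (ha : ψ a ≠ 0) (hb : ψ b ≠ 0) :
    signChanges ψ (Icc a b) = {x ∈ Icc a b | ψ x = 0}.encard := by
  refine le_antisymm (signChanges_le_encard_zeros hψ) ?_
  obtain ⟨n, hn⟩ := ENat.ne_top_iff_exists.1
    (finite_zeros_of_signCrossesAt isCompact_Icc hψ hcross).encard_lt_top.ne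
  obtain ⟨θ, hθ, -⟩ := exists_isSignChain_of_encard_zeros ha n b hab hψ hcross hb hn.symm
  exact hn ▸ hθ.le_signChanges

end SignCrossing

theorem eventually_encard_zeros_le {ι : Type*} {l : Filter ι} {φ : ℝ → ℝ} {φn : ι → ℝ → ℝ}
    {s : Set ℝ} (hs : IsCompact s) (hφ : ContinuousOn φ s)
    (hφ' : ContinuousOn (derivWithin φ s) s) (hφn : ∀ n, ContinuousOn (φn n) s)
    (hsimple : ∀ z ∈ s, φ z = 0 → s ∈ 𝓝 z ∧ derivWithin φ s z ≠ 0)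
    (hfin : {x ∈ s | φ x = 0}.Finite) (hconv : TendstoUniformlyOn φn φ l s)
    (hconv' : TendstoUniformlyOn (fun n => derivWithin (φn n) s) (derivWithin φ s) l s) :
    ∀ᶠ n in l, {x ∈ s | φn n x = 0}.encard ≤ {x ∈ s | φ x = 0}.encard := by
  set Z := {x ∈ s | φ x = 0}
  choose! η hη hηs hmono using fun z (hz : z ∈ Z) =>
    exists_Icc_strictMonoOn_or_strictAntiOn_of_deriv_near
      ((hφ' z hz.1).continuousAt (hsimple z hz.1 hz.2).1) (hsimple z hz.1 hz.2).2
      (hsimple z hz.1 hz.2).1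
  have hJ : ∀ z ∈ Z, Icc (z - η z) (z + η z) ⊆ s := fun z hz => (hηs z hz).trans interior_subset
  set U := ⋃ z ∈ Z, Ioo (z - η z) (z + η z)
  have hK : ∀ᶠ n in l, ∀ x ∈ s \ U, φn n x ≠ 0 :=
    (hconv.mono sdiff_subset).eventually_forall_ne_zero
      (hs.diff (isOpen_biUnion fun _ _ => isOpen_Ioo)) (hφ.mono sdiff_subset)
      fun x hx h0 => hx.2 (mem_biUnion (x := x) ⟨hx.1, h0⟩
        ⟨by linarith [hη x ⟨hx.1, h0⟩], by linarith [hη x ⟨hx.1, h0⟩]⟩)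
  have hD : ∀ᶠ n in l, ∀ z ∈ Z, ∀ x ∈ s,
      dist (derivWithin φ s x) (derivWithin (φn n) s x) < |derivWithin φ s z| / 2 :=
    hfin.eventually_all.2 fun z hz =>
      Metric.tendstoUniformlyOn_iff.1 hconv' _ (half_pos (abs_pos.2 (hsimple z hz.1 hz.2).2))
  filter_upwards [hK, hD] with n hKn hDn
  refine encard_le_of_subset_biUnion (J := fun z => Icc (z - η z) (z + η z))
    (fun x hx => ?_) fun z hz => ?_
  · obtain ⟨z, hz, hxz⟩ := mem_iUnion₂.1 (not_not.1 fun hxU => hKn x ⟨hx.1, hxU⟩ hx.2)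
    exact mem_iUnion₂.2 ⟨z, hz, Ioo_subset_Icc_self hxz⟩
  · have hinj := (hmono z hz (φn n) ((hφn n).mono (hJ z hz))
      fun x hx => hDn z hz x (hJ z hz hx)).elim StrictMonoOn.injOn StrictAntiOn.injOn
    exact fun x hx y hy => hinj hx.2 hy.2 (hx.1.2.trans hy.1.2.symm)

theorem signChanges_eventually_eq_general (a : ℝ) (ha : a < 0)
    (φ : ℝ → ℝ) (φn : ℕ → ℝ → ℝ)
    (hφ : ContDiffOn ℝ 1 φ (Set.Icc a 0))
    (hφn : ∀ n, ContDiffOn ℝ 1 (φn n) (Set.Icc a 0))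
    (hsimple : ∀ s ∈ Set.Icc a 0, φ s = 0 → derivWithin φ (Set.Icc a 0) s ≠ 0)
    (hconv : TendstoUniformlyOn φn φ atTop (Set.Icc a 0))
    (hconv' : TendstoUniformlyOn (fun n => derivWithin (φn n) (Set.Icc a 0))
      (derivWithin φ (Set.Icc a 0)) atTop (Set.Icc a 0))
    (hend1 : φ a ≠ 0) (hend2 : φ 0 ≠ 0) :
    ∀ᶠ n in atTop,
      signChanges (φn n) (Set.Icc a 0) = signChanges φ (Set.Icc a 0) := by
  set I := Icc a 0
  have hnhds : ∀ z ∈ I, φ z = 0 → I ∈ 𝓝 z := fun z hz h0 => Icc_mem_nhds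
    (hz.1.lt_of_ne (by rintro rfl; exact hend1 h0)) (hz.2.lt_of_ne (by rintro rfl; exact hend2 h0))
  have hφ' : ContinuousOn (derivWithin φ I) I :=
    hφ.continuousOn_derivWithin (uniqueDiffOn_Icc ha) le_rfl
  have hcross : ∀ z ∈ I, φ z = 0 → SignCrossesAt φ z := fun z hz h0 =>
    signCrossesAt_of_derivWithin_ne_zero hφ.continuousOn ((hφ' z hz).continuousAt (hnhds z hz h0))
      (hnhds z hz h0) h0 (hsimple z hz h0)
  have hfin := finite_zeros_of_signCrossesAt isCompact_Icc hφ.continuousOn hcross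
  have hsc := signChanges_eq_encard_zeros ha.le hφ.continuousOn hcross hend1 hend2
  filter_upwards [eventually_encard_zeros_le isCompact_Icc hφ.continuousOn hφ'
      (fun n => (hφn n).continuousOn) (fun z hz h0 => ⟨hnhds z hz h0, hsimple z hz h0⟩) hfin
      hconv hconv',
    eventually_signChanges_le (fun x hx => hconv.tendsto_at hx) (hsc ▸ hfin.encard_lt_top.ne)]
    with n hzeros hle
  exact le_antisymm ((signChanges_le_encard_zeros (hφn n).continuousOn).trans
    (hzeros.trans hsc.ge)) hle

/-- Convergence in `C¹` to a function with only simple zeros, nonvanishing at the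
endpoints, eventually preserves the number of sign changes on `[a,0]`. -/
theorem signChanges_eventually_eq (a : ℝ) (ha : a < 0)
    (φ : ℝ → ℝ) (φn : ℕ → ℝ → ℝ)
    (hφ : ContDiffOn ℝ 1 φ (Set.Icc a 0))
    (hφn : ∀ n, ContDiffOn ℝ 1 (φn n) (Set.Icc a 0))
    (hsimple : ∀ s ∈ Set.Icc a 0, φ s = 0 → derivWithin φ (Set.Icc a 0) s ≠ 0)
    (hφ0 : ∃ s ∈ Set.Icc a 0, φ s ≠ 0)
    (hφn0 : ∀ n, ∃ s ∈ Set.Icc a 0, φn n s ≠ 0)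
    (hconv : TendstoUniformlyOn φn φ atTop (Set.Icc a 0))
    (hconv' : TendstoUniformlyOn (fun n => derivWithin (φn n) (Set.Icc a 0))
      (derivWithin φ (Set.Icc a 0)) atTop (Set.Icc a 0))
    (hend1 : φ a ≠ 0) (hend2 : φ 0 ≠ 0) :
    ∀ᶠ n in atTop,
      signChanges (φn n) (Set.Icc a 0) = signChanges φ (Set.Icc a 0) :=
  signChanges_eventually_eq_general a ha φ φn hφ hφn hsimple hconv hconv' hend1 hend2
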